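/- For every Borel measurable set A ⊆ Ω, N_ν(A) → G(A) as ν → ∞ (i.e., the function ν ↦ N_ν(A) tends to G(A) along the atTop filter on the positive reals). -/

import Mathlib

open MeasureTheory Filter Topology

/-- The orthogonality penalty `S(λ) = ∑_{j<k} ⟨λ_j, λ_k⟩²` on K-tuples of
elements of `L²(μ₀)`. -/
noncomputable def nemoS {T : Type*} [MeasurableSpace T] (μ₀ : Measure T) (K : ℕ)
    (l : Fin K → Lp ℝ 2 μ₀) : ℝ :=
  ∑ p ∈ Finset.univ.filter (fun p : Fin K × Fin K => p.1 < p.2),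
    (inner ℝ (l p.1) (l p.2) : ℝ) ^ 2

/-- The NeMO measure of a set `A`, as a real number:
`N_ν(A) = (∫_A exp(-S(λ)/(2ν)) dG) / (∫_Ω exp(-S(λ)/(2ν)) dG)`. -/
noncomputable def nemoN {T : Type*} [MeasurableSpace T] (μ₀ : Measure T) (K : ℕ)
    [MeasurableSpace (Fin K → Lp ℝ 2 μ₀)]
    (G : Measure (Fin K → Lp ℝ 2 μ₀)) (ν : ℝ) (A : Set (Fin K → Lp ℝ 2 μ₀)) : ℝ :=
  (∫ l in A, Real.exp (-(nemoS μ₀ K l) / (2 * ν)) ∂G) /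
    (∫ l, Real.exp (-(nemoS μ₀ K l) / (2 * ν)) ∂G)

/-! For `ν → ∞` the Gibbs weights `exp(-S/(2ν))` increase to `1` and are bounded by `1` since
`S ≥ 0`, so by dominated convergence both integrals defining `N_ν(A)` tend to `G(A)` and
`G(Ω) = 1` respectively. -/

theorem tendsto_integral_exp_neg_div_atTop {X : Type*} [MeasurableSpace X] {μ : Measure X}
    [IsFiniteMeasure μ] {f : X → ℝ} (hf : AEMeasurable f μ) (hf0 : ∀ᵐ x ∂μ, 0 ≤ f x) :
    Tendsto (fun t : ℝ => ∫ x, Real.exp (-f x / t) ∂μ) atTop (𝓝 (μ.real Set.univ)) := by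
  have hlim : ∫ _, (1 : ℝ) ∂μ = μ.real Set.univ := by simp
  rw [← hlim]
  refine tendsto_integral_filter_of_dominated_convergence (fun _ => 1)
    (Eventually.of_forall fun t => (hf.neg.div_const t).exp.aestronglyMeasurable) ?_
    (integrable_const 1) (Eventually.of_forall fun x => ?_)
  · filter_upwards [eventually_ge_atTop 0] with t ht
    filter_upwards [hf0] with x hx
    rw [Real.norm_of_nonneg (Real.exp_nonneg _), Real.exp_le_one_iff]
    exact div_nonpos_of_nonpos_of_nonneg (neg_nonpos.mpr hx) ht
  · rw [← Real.exp_zero]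
    exact (Real.continuous_exp.tendsto 0).comp (tendsto_const_nhds.div_atTop tendsto_id)

theorem continuous_nemoS {T : Type*} [MeasurableSpace T] (μ₀ : Measure T) (K : ℕ) :
    Continuous (nemoS μ₀ K) :=
  continuous_finsetSum _ fun p _ =>
    ((continuous_apply p.1).inner (𝕜 := ℝ) (continuous_apply p.2)).pow 2

theorem nemoS_nonneg {T : Type*} [MeasurableSpace T] (μ₀ : Measure T) (K : ℕ)
    (l : Fin K → Lp ℝ 2 μ₀) : 0 ≤ nemoS μ₀ K l :=
  Finset.sum_nonneg fun _ _ => sq_nonneg _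

theorem tendsto_integral_exp_neg_nemoS_div_atTop {T : Type*} [MeasurableSpace T]
    (μ₀ : Measure T) (K : ℕ) [MeasurableSpace (Fin K → Lp ℝ 2 μ₀)]
    [OpensMeasurableSpace (Fin K → Lp ℝ 2 μ₀)] (μ : Measure (Fin K → Lp ℝ 2 μ₀)) [IsFiniteMeasure μ] :
    Tendsto (fun ν : ℝ => ∫ l, Real.exp (-(nemoS μ₀ K l) / (2 * ν)) ∂μ) atTop
      (𝓝 (μ.real Set.univ)) :=
  (tendsto_integral_exp_neg_div_atTop (continuous_nemoS μ₀ K).aemeasurable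
    (ae_of_all _ (nemoS_nonneg μ₀ K))).comp (tendsto_id.const_mul_atTop two_pos)

theorem nemo_tendsto_of_atTop_general
    {T : Type*} [MeasurableSpace T] (μ₀ : Measure T)
    (K : ℕ)
    [MeasurableSpace (Fin K → Lp ℝ 2 μ₀)] [BorelSpace (Fin K → Lp ℝ 2 μ₀)]
    (G : Measure (Fin K → Lp ℝ 2 μ₀)) [IsProbabilityMeasure G]
    (A : Set (Fin K → Lp ℝ 2 μ₀)) :
    Tendsto (fun ν : ℝ => nemoN μ₀ K G ν A) atTop (𝓝 (G A).toReal) := by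
  have hnum := tendsto_integral_exp_neg_nemoS_div_atTop μ₀ K (G.restrict A)
  have hden := tendsto_integral_exp_neg_nemoS_div_atTop μ₀ K G
  rw [measureReal_restrict_apply_univ] at hnum
  rw [probReal_univ] at hden
  rw [← div_one (G A).toReal]
  exact hnum.div hden one_ne_zero

/-- Proposition 2: for every Borel measurable set `A`, `N_ν(A) → G(A)` as
`ν → ∞`. -/
theorem nemo_tendsto_of_atTop
    {T : Type*} [MeasurableSpace T] (μ₀ : Measure T) [SigmaFinite μ₀]
    (K : ℕ) (hK : 2 ≤ K)
    [MeasurableSpace (Fin K → Lp ℝ 2 μ₀)] [BorelSpace (Fin K → Lp ℝ 2 μ₀)]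
    (G : Measure (Fin K → Lp ℝ 2 μ₀)) [IsProbabilityMeasure G]
    (A : Set (Fin K → Lp ℝ 2 μ₀)) (hA : MeasurableSet A) :
    Tendsto (fun ν : ℝ => nemoN μ₀ K G ν A) atTop (𝓝 (G A).toReal) :=
  nemo_tendsto_of_atTop_general μ₀ K G A
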